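/- arXiv:0907.2836 — 2 statements merged into one kernel-verified Lean document; each statement's English description precedes it below -/
import Mathlib

section
/- If p(z) is a complex polynomial of degree n, then max_{|z|=1} |p'(z)| ≤ n · max_{|z|=1} |p(z)|. -/
/-!
Suppose `‖p‖ ≤ M` on the unit circle, `n = natDegree p`, and `‖p'(z)‖ > n M` at some `z` with
`‖z‖ = 1`. Choose `λ` with `λ n z^(n-1) = p'(z)`, so that `‖λ‖ > M`, and put `g = λ X^n - p`.
The maximum modulus principle, applied to the reversed polynomial `X^n p(1/X)`, gives
`‖p(w)‖ ≤ M ‖w‖^n` for `‖w‖ ≥ 1`; hence every root of `g` lies in the open unit disc.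
By Gauss–Lucas so does every root of `g'`, yet `g'(z) = 0`.
-/

open Polynomial

noncomputable def maxMod (p : Polynomial ℂ) (c : ℝ) : ℝ :=
  sSup ((fun z => ‖p.eval z‖) '' {z : ℂ | ‖z‖ = c})

noncomputable def minMod (p : Polynomial ℂ) (c : ℝ) : ℝ :=
  sInf ((fun z => ‖p.eval z‖) '' {z : ℂ | ‖z‖ = c})

noncomputable def polarDeriv (p : Polynomial ℂ) (α : ℂ) : Polynomial ℂ :=
  C (p.natDegree : ℂ) * p + (C α - X) * derivative p

namespace Polynomial

theorem eval_reverse_inv_mul_pow {K : Type*} [Field K] (f : K[X]) {x : K} (hx : x ≠ 0) :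
    f.reverse.eval x⁻¹ * x ^ f.natDegree = f.eval x := by
  let := invertibleOfNonzero hx
  simpa using eval₂_reverse_mul_pow (RingHom.id K) x f

theorem mem_of_eval_derivative_eq_zero {P : ℂ[X]} {s : Set ℂ} (hs : Convex ℝ s)
    (hP : 0 < P.degree) (hroots : ∀ w, P.IsRoot w → w ∈ s) {z : ℂ}
    (hz : P.derivative.eval z = 0) : z ∈ s := by
  rw [eq_centerMass_of_eval_derivative_eq_zero hP hz]
  refine hs.centerMass_mem (fun w _ => derivRootWeight_nonneg P z w)
    (sum_derivRootWeight_pos hP z) (fun w hw => hroots w ?_)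
  exact isRoot_of_mem_roots (Multiset.mem_toFinset.1 hw)

theorem norm_eval_le_of_forall_norm_eq_one {q : ℂ[X]} {M : ℝ}
    (h : ∀ u : ℂ, ‖u‖ = 1 → ‖q.eval u‖ ≤ M) {v : ℂ} (hv : ‖v‖ ≤ 1) : ‖q.eval v‖ ≤ M :=
  Complex.norm_le_of_forall_mem_frontier_norm_le (U := Metric.ball 0 1) Metric.isBounded_ball
    q.differentiable.diffContOnCl
    (fun u hu => h u (by simpa [frontier_ball] using hu)) (by simpa [closure_ball] using hv)

section UnitCircleBound

variable {p : ℂ[X]} {M : ℝ} (hp : ∀ u : ℂ, ‖u‖ = 1 → ‖p.eval u‖ ≤ M)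
include hp

theorem norm_eval_reverse_le {v : ℂ} (hv : ‖v‖ ≤ 1) : ‖p.reverse.eval v‖ ≤ M := by
  refine norm_eval_le_of_forall_norm_eq_one (fun u hu => ?_) hv
  have hu0 : u ≠ 0 := norm_ne_zero_iff.1 (by rw [hu]; exact one_ne_zero)
  have h := eval_reverse_inv_mul_pow p (inv_ne_zero hu0)
  rw [inv_inv] at h
  have hnorm := congrArg norm h
  rw [norm_mul, norm_pow, norm_inv, hu, inv_one, one_pow, mul_one] at hnorm
  rw [hnorm]
  exact hp _ (by rw [norm_inv, hu, inv_one])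

theorem norm_leadingCoeff_le : ‖p.leadingCoeff‖ ≤ M := by
  rw [← coeff_zero_reverse, coeff_zero_eq_eval_zero]
  exact norm_eval_reverse_le hp (by simp)

theorem norm_eval_le_mul_norm_pow {w : ℂ} (hw : 1 ≤ ‖w‖) :
    ‖p.eval w‖ ≤ M * ‖w‖ ^ p.natDegree := by
  have hw0 : w ≠ 0 := norm_pos_iff.1 (one_pos.trans_le hw)
  rw [← eval_reverse_inv_mul_pow p hw0, norm_mul, norm_pow]
  gcongr
  exact norm_eval_reverse_le hp (by rw [norm_inv]; exact inv_le_one_of_one_le₀ hw)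

theorem norm_lt_one_of_eval_eq_mul_pow {lam w : ℂ} (hlam : M < ‖lam‖)
    (hw : p.eval w = lam * w ^ p.natDegree) : ‖w‖ < 1 := by
  by_contra! hw1
  have hpow : 0 < ‖w‖ ^ p.natDegree := pow_pos (one_pos.trans_le hw1) _
  have := norm_eval_le_mul_norm_pow hp hw1
  rw [hw, norm_mul, norm_pow] at this
  exact (mul_lt_mul_of_pos_right hlam hpow).not_ge this

theorem norm_lt_one_of_eval_derivative_C_mul_X_pow_sub_eq_zero (hn : p.natDegree ≠ 0)
    {lam z : ℂ} (hlam : M < ‖lam‖) (hz : (C lam * X ^ p.natDegree - p).derivative.eval z = 0) :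
    ‖z‖ < 1 := by
  set g := C lam * X ^ p.natDegree - p with hg_def
  have hg_coeff : g.coeff p.natDegree ≠ 0 := by
    rw [hg_def, coeff_sub, coeff_C_mul_X_pow, if_pos rfl, ← leadingCoeff, sub_ne_zero]
    rintro rfl
    exact (norm_leadingCoeff_le hp).not_gt hlam
  have hg_deg : 0 < g.degree := natDegree_pos_iff_degree_pos.1
    ((Nat.pos_of_ne_zero hn).trans_le (le_natDegree_of_ne_zero hg_coeff))
  have hg_roots : ∀ w, g.IsRoot w → w ∈ Metric.ball (0 : ℂ) 1 := by
    intro w hw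
    rw [IsRoot.def, hg_def, eval_sub, eval_C_mul, eval_pow, eval_X, sub_eq_zero] at hw
    exact mem_ball_zero_iff.2 (norm_lt_one_of_eval_eq_mul_pow hp hlam hw.symm)
  exact mem_ball_zero_iff.1 (mem_of_eval_derivative_eq_zero (convex_ball 0 1) hg_deg hg_roots hz)

theorem norm_eval_derivative_le {z : ℂ} (hz : ‖z‖ = 1) :
    ‖p.derivative.eval z‖ ≤ p.natDegree * M := by
  set n := p.natDegree
  by_contra! hlt
  have hn : n ≠ 0 := by
    intro h0
    simp [derivative_of_natDegree_zero h0, h0] at hlt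
  have hz0 : z ≠ 0 := norm_ne_zero_iff.1 (by rw [hz]; exact one_ne_zero)
  have hden : (n : ℂ) * z ^ (n - 1) ≠ 0 := mul_ne_zero (Nat.cast_ne_zero.2 hn) (pow_ne_zero _ hz0)
  set lam := p.derivative.eval z / (n * z ^ (n - 1)) with hlam_def
  have hlam : M < ‖lam‖ := by
    rw [hlam_def, norm_div, norm_mul, norm_pow, hz, one_pow, mul_one, Complex.norm_natCast,
      lt_div_iff₀ (Nat.cast_pos.2 (Nat.pos_of_ne_zero hn)), mul_comm]
    exact hlt
  have hcrit : (C lam * X ^ n - p).derivative.eval z = 0 := by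
    rw [derivative_sub, derivative_C_mul_X_pow, eval_sub, eval_C_mul, eval_pow, eval_X,
      sub_eq_zero, mul_assoc, hlam_def, div_mul_cancel₀ _ hden]
  exact (norm_lt_one_of_eval_derivative_C_mul_X_pow_sub_eq_zero hp hn hlam hcrit).ne hz

end UnitCircleBound

end Polynomial

theorem norm_eval_le_maxMod (p : ℂ[X]) {z : ℂ} (hz : ‖z‖ = 1) : ‖p.eval z‖ ≤ maxMod p 1 := by
  refine le_csSup ?_ ⟨z, hz, rfl⟩
  have hsphere : {z : ℂ | ‖z‖ = 1} = Metric.sphere 0 1 := by ext; simp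
  rw [hsphere]
  exact ((isCompact_sphere 0 1).image (continuous_norm.comp p.continuous)).bddAbove

theorem maxMod_le {p : ℂ[X]} {M : ℝ} (h : ∀ z : ℂ, ‖z‖ = 1 → ‖p.eval z‖ ≤ M) :
    maxMod p 1 ≤ M :=
  csSup_le ⟨_, 1, by simp, rfl⟩ (by rintro _ ⟨z, hz, rfl⟩; exact h z hz)

theorem stmt0 (p : Polynomial ℂ) (n : ℕ) (hn : p.natDegree = n) :
    maxMod (derivative p) 1 ≤ n * maxMod p 1 := by
  subst hn
  exact maxMod_le fun z hz => norm_eval_derivative_le (fun _ hu => norm_eval_le_maxMod p hu) hz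
end

section
/- If p(z) is a complex polynomial of degree n having no zeros in the open unit disk |z| < 1, then max_{|z|=1} |p'(z)| ≤ (n/2) · max_{|z|=1} |p(z)|. -/
/-!
Write `D(z) = n p(z) - z p'(z)`, the polar derivative `polarDeriv p 0`. If every zero `r` of `p`
satisfies `|z| ≤ |r|`, each term of `z p'(z) / p(z) = Σ z / (z - r)` has real part at most `1/2`,
so `Re (z p'(z) / p(z)) ≤ n/2`, which is equivalent to `|z p'(z)| ≤ |D(z)|`.
Let `M` bound `|p|` on the closed unit disk. For `|λ| > M` the polynomial `p - λ` has no zeros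
there, so on the unit circle `|p'(z)| ≤ |D(z) - nλ|`. Taking `λ` with the argument of `D(z)` and
letting `|λ| ↓ M` gives `|p'(z)| + |D(z)| ≤ n M` for every polynomial; together with
`|p'(z)| ≤ |D(z)|` this is the Erdős–Lax bound, and `M = maxMod p 1` by the maximum modulus
principle.
-/

open Polynomial

namespace Complex

theorem re_le_half_iff_norm_le_norm_sub {c : ℝ} (hc : 0 < c) (u : ℂ) :
    u.re ≤ c / 2 ↔ ‖u‖ ≤ ‖(c : ℂ) - u‖ := by
  rw [norm_def, norm_def, Real.sqrt_le_sqrt_iff (normSq_nonneg _)]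
  simp only [normSq_apply, sub_re, sub_im, ofReal_re, ofReal_im]
  constructor <;> intro h <;> nlinarith

theorem re_div_sub_le_half {z r : ℂ} (hzr : ‖z‖ ≤ ‖r‖) :
    (z / (z - r)).re ≤ 1 / 2 := by
  rcases eq_or_ne z r with rfl | hne
  · simp
  have hsub : z - r ≠ 0 := sub_ne_zero.mpr hne
  refine (re_le_half_iff_norm_le_norm_sub one_pos _).mpr ?_
  rw [ofReal_one, show 1 - z / (z - r) = -r / (z - r) by field_simp; ring, norm_div, norm_div,
    norm_neg]
  gcongr

theorem norm_le_of_forall_norm_eq_le {F : Type*} [NormedAddCommGroup F] [NormedSpace ℂ F]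
    {f : ℂ → F} (hf : Differentiable ℂ f) {r M : ℝ} (hr : r ≠ 0)
    (h : ∀ z : ℂ, ‖z‖ = r → ‖f z‖ ≤ M) {w : ℂ} (hw : ‖w‖ ≤ r) : ‖f w‖ ≤ M := by
  refine norm_le_of_forall_mem_frontier_norm_le (Metric.isBounded_ball (x := 0) (r := r))
    hf.diffContOnCl (fun z hz => ?_) ?_
  · rw [frontier_ball 0 hr, mem_sphere_zero_iff_norm] at hz
    exact h z hz
  · rwa [closure_ball 0 hr, mem_closedBall_zero_iff]

end Complex

namespace Polynomial

theorem norm_eval_le_maxMod (p : ℂ[X]) {c : ℝ} {z : ℂ} (hz : ‖z‖ = c) :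
    ‖p.eval z‖ ≤ maxMod p c := by
  have hcompact : IsCompact {z : ℂ | ‖z‖ = c} := by
    simpa [Metric.sphere, dist_zero_right] using isCompact_sphere (0 : ℂ) c
  exact le_csSup (hcompact.bddAbove_image (continuous_norm.comp p.continuous).continuousOn)
    ⟨z, hz, rfl⟩

theorem maxMod_le (p : ℂ[X]) {c B : ℝ} (hc : 0 ≤ c)
    (h : ∀ z : ℂ, ‖z‖ = c → ‖p.eval z‖ ≤ B) : maxMod p c ≤ B := by
  have hne : {z : ℂ | ‖z‖ = c}.Nonempty := ⟨c, by simp [abs_of_nonneg hc]⟩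
  refine csSup_le (hne.image _) ?_
  rintro _ ⟨z, hz, rfl⟩
  exact h z hz

theorem eval_polarDeriv_zero (p : ℂ[X]) (z : ℂ) :
    (polarDeriv p 0).eval z = p.natDegree * p.eval z - z * (derivative p).eval z := by
  simp only [polarDeriv, map_natCast, map_zero, zero_sub, neg_mul, eval_add, eval_mul,
    eval_natCast, eval_neg, eval_X]
  ring

theorem eval_polarDeriv_zero_sub_C (p : ℂ[X]) (l z : ℂ) :
    (polarDeriv (p - C l) 0).eval z = (polarDeriv p 0).eval z - p.natDegree * l := by
  simp only [eval_polarDeriv_zero, natDegree_sub_C, derivative_sub, derivative_C, sub_zero,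
    eval_sub, eval_C]
  ring

theorem norm_mul_eval_derivative_le_norm_eval_polarDeriv {p : ℂ[X]} {z : ℂ}
    (hroots : ∀ r : ℂ, p.IsRoot r → ‖z‖ ≤ ‖r‖) :
    ‖z * (derivative p).eval z‖ ≤ ‖(polarDeriv p 0).eval z‖ := by
  rcases Nat.eq_zero_or_pos p.natDegree with hdeg | hdeg
  · simp [derivative_of_natDegree_zero hdeg]
  by_cases hpz : p.eval z = 0
  · simp [eval_polarDeriv_zero, hpz]
  set S := (p.roots.map fun r => z / (z - r)).sum
  have hderiv : z * (derivative p).eval z = p.eval z * S := by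
    rw [(IsAlgClosed.splits p).eval_derivative_eq_eval_mul_sum hpz, mul_left_comm,
      ← Multiset.sum_map_mul_left]
    simp only [mul_one_div, S]
  have hre : S.re ≤ p.natDegree / 2 := by
    calc S.re = (p.roots.map fun r => (z / (z - r)).re).sum := by
          simpa [Multiset.map_map] using
            map_multiset_sum Complex.reAddGroupHom (p.roots.map fun r => z / (z - r))
      _ ≤ (p.roots.map fun r => (z / (z - r)).re).card • (1 / 2 : ℝ) := by
          refine Multiset.sum_le_card_nsmul _ _ fun x hx => ?_
          obtain ⟨r, hr, rfl⟩ := Multiset.mem_map.mp hx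
          exact Complex.re_div_sub_le_half (hroots r (isRoot_of_mem_roots hr))
      _ = p.natDegree / 2 := by
          rw [Multiset.card_map, IsAlgClosed.card_roots_eq_natDegree, nsmul_eq_mul]; ring
  have hS := (Complex.re_le_half_iff_norm_le_norm_sub (Nat.cast_pos.mpr hdeg) S).mp hre
  calc ‖z * (derivative p).eval z‖ = ‖p.eval z‖ * ‖S‖ := by rw [hderiv, norm_mul]
    _ ≤ ‖p.eval z‖ * ‖(p.natDegree : ℂ) - S‖ := by gcongr; exact_mod_cast hS
    _ = ‖(polarDeriv p 0).eval z‖ := by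
        rw [eval_polarDeriv_zero, hderiv, ← norm_mul]; ring_nf

theorem norm_eval_derivative_le_norm_eval_polarDeriv_sub {p : ℂ[X]} {M : ℝ}
    (hM : ∀ w : ℂ, ‖w‖ ≤ 1 → ‖p.eval w‖ ≤ M) {z : ℂ} (hz : ‖z‖ = 1) (l : ℂ) (hl : M < ‖l‖) :
    ‖(derivative p).eval z‖ ≤ ‖(polarDeriv p 0).eval z - p.natDegree * l‖ := by
  have hroots : ∀ r : ℂ, (p - C l).IsRoot r → ‖z‖ ≤ ‖r‖ := by
    intro r hr
    by_contra! hr1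
    have hpr : p.eval r = l := by simpa [sub_eq_zero] using hr
    exact (hM r (hz ▸ hr1.le)).not_gt (hpr ▸ hl)
  have h := norm_mul_eval_derivative_le_norm_eval_polarDeriv hroots
  rwa [norm_mul, hz, one_mul, derivative_sub, derivative_C, sub_zero,
    eval_polarDeriv_zero_sub_C] at h

theorem norm_eval_derivative_add_norm_eval_polarDeriv_le {p : ℂ[X]} {M : ℝ}
    (hM : ∀ w : ℂ, ‖w‖ ≤ 1 → ‖p.eval w‖ ≤ M) {z : ℂ} (hz : ‖z‖ = 1) :
    ‖(derivative p).eval z‖ + ‖(polarDeriv p 0).eval z‖ ≤ p.natDegree * M := by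
  set n := p.natDegree
  set D := (polarDeriv p 0).eval z
  rcases Nat.eq_zero_or_pos n with hdeg | hdeg
  · simp [D, eval_polarDeriv_zero, derivative_of_natDegree_zero hdeg, n, hdeg]
  have hn : (0 : ℝ) < n := Nat.cast_pos.mpr hdeg
  obtain ⟨u, hu, hDu⟩ : ∃ u : ℂ, ‖u‖ = 1 ∧ D = ‖D‖ * u :=
    ⟨_, Complex.norm_exp_ofReal_mul_I _, (Complex.norm_mul_exp_arg_mul_I D).symm⟩
  have hray : ∀ t : ℝ, M < t → ‖(derivative p).eval z‖ ≤ |‖D‖ - n * t| := by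
    intro t ht
    have h := norm_eval_derivative_le_norm_eval_polarDeriv_sub hM hz (t * u) (by simpa [hu] using ht.trans_le (le_abs_self t))
    have hDt : D - n * (t * u) = ((‖D‖ - n * t : ℝ) : ℂ) * u := by
      nth_rw 1 [hDu]; push_cast; ring
    rwa [hDt, norm_mul, hu, mul_one, Complex.norm_real, Real.norm_eq_abs] at h
  -- If `‖D‖ > n M`, then `t = ‖D‖ / n` forces `p'(z) = 0`, whence `‖D‖ = n ‖p(z)‖ ≤ n M`.
  have hD : ‖D‖ ≤ n * M := by
    by_contra! h
    have hp' : (derivative p).eval z = 0 := by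
      simpa [mul_div_cancel₀ _ hn.ne'] using hray (‖D‖ / n) ((lt_div_iff₀' hn).mpr h)
    have hDp : ‖D‖ = n * ‖p.eval z‖ := by simp [D, n, eval_polarDeriv_zero, hp']
    nlinarith [hM z hz.le]
  rw [← div_le_iff₀' hn]
  refine le_of_forall_gt_imp_ge_of_dense fun t ht => ?_
  have h := hray t ht
  rw [abs_of_nonpos (by nlinarith)] at h
  rw [div_le_iff₀' hn]
  linarith

end Polynomial

theorem stmt1 (p : Polynomial ℂ) (n : ℕ) (hn : p.natDegree = n)
    (hz : ∀ z : ℂ, p.IsRoot z → 1 ≤ ‖z‖) :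
    maxMod (derivative p) 1 ≤ (n / 2 : ℝ) * maxMod p 1 := by
  subst hn
  have hdisk : ∀ w : ℂ, ‖w‖ ≤ 1 → ‖p.eval w‖ ≤ maxMod p 1 :=
    fun w => Complex.norm_le_of_forall_norm_eq_le p.differentiable one_ne_zero
      (fun z => p.norm_eval_le_maxMod)
  refine maxMod_le _ zero_le_one fun z hz1 => ?_
  have hlaguerre := norm_mul_eval_derivative_le_norm_eval_polarDeriv fun r hr => hz1 ▸ hz r hr
  rw [norm_mul, hz1, one_mul] at hlaguerre
  have hsum := norm_eval_derivative_add_norm_eval_polarDeriv_le hdisk hz1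
  linarith
end
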